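/- In the Ikonen–Toivanen splitting update, given Δt > 0, intermediate value W̄_n, previous multiplier μ̂_{n-1} ≥ 0 and constraint Ψ_n, the updated pair Ŵ_n = max{W̄_n − Δt μ̂_{n-1}, Ψ_n} and μ̂_n = max{0, μ̂_{n-1} + (Ψ_n − W̄_n)/Δt} (componentwise) satisfies, in each component: Ŵ_n ≥ Ψ_n, μ̂_n ≥ 0, and the complementarity relation (Ŵ_n − Ψ_n) · μ̂_n = 0; moreover Ŵ_n − Δt μ̂_n = W̄_n − Δt μ̂_{n-1}. -/
import Mathlib

theorem stmt18 (Δt μprev Wbar Ψ : ℝ) (hΔt : 0 < Δt) (hμ : 0 ≤ μprev)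
    (Wn μn : ℝ)
    (hWn : Wn = max (Wbar - Δt * μprev) Ψ)
    (hμn : μn = max 0 (μprev + (Ψ - Wbar) / Δt)) :
    Ψ ≤ Wn ∧ 0 ≤ μn ∧ (Wn - Ψ) * μn = 0 ∧ Wn - Δt * μn = Wbar - Δt * μprev := by
  have hΔt' : Δt ≠ 0 := ne_of_gt hΔt
  rcases le_total (μprev + (Ψ - Wbar) / Δt) 0 with h | h
  · have h1 : Ψ ≤ Wbar - Δt * μprev := by
      nlinarith [mul_le_mul_of_nonneg_left h (le_of_lt hΔt), mul_div_cancel₀ (Ψ - Wbar) hΔt']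
    rw [hWn, hμn, max_eq_left h1, max_eq_left h]
    refine ⟨h1, le_refl 0, by ring, by ring⟩
  · have h1 : Wbar - Δt * μprev ≤ Ψ := by
      nlinarith [mul_le_mul_of_nonneg_left h (le_of_lt hΔt), mul_div_cancel₀ (Ψ - Wbar) hΔt']
    rw [hWn, hμn, max_eq_right h1, max_eq_right h]
    refine ⟨le_refl Ψ, h, by ring, ?_⟩
    field_simp
    ring
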